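/- Let n, M, N ∈ ℕ and ψ: ℕ → [0,∞) satisfy ψ(2ⁿ)/(125·2ⁿ) ≤ 3^{-N} ≤ 5ψ(2ⁿ)/2ⁿ ≤ 3^{-M} ≤ 2^{9-n}. Let C_L be the set of endpoints of the level-L intervals of the Cantor construction, and for t > 0 let tA_n = ⋃_{a=0}^{2ⁿ} B(a/2ⁿ, t·ψ(2ⁿ)/2ⁿ) and tA_n(M) = ⋃_{a=0}^{2ⁿ} B(a/2ⁿ, t/3^M). Then |C_N ∩ 5A_n| ≤ C·|C_M ∩ 5A_n(M)| for an absolute constant C. -/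

import Mathlib

/-!
A point `x ∈ C_N ∩ 5A_n` lies within `5ψ(2ⁿ)/2ⁿ ≤ 3⁻ᴹ` of a centre `a/2ⁿ`, and within `3⁻ᴹ` of
the left endpoint `y` of its level-`M` Cantor interval, so `y ∈ C_M ∩ 5A_n(M)`. Count `x` through
its centre and the centre through `y`: a ball of radius `5ψ(2ⁿ)/2ⁿ ≤ 625 · 3⁻ᴺ` contains at most
`1251` points of `3⁻ᴺℤ`, and a ball of radius `5 · 3⁻ᴹ ≤ 5 · 2⁹⁻ⁿ` at most `5121` points of `2⁻ⁿℤ`.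
-/

open Metric Finset

/-- `C_L`: endpoints of the level-`L` Cantor intervals, i.e. rationals in `[0,1]` with
denominator `3^L` lying in the Cantor set. -/
def cantorEndpoints (L : ℕ) : Set ℝ :=
  {x | (∃ b : ℕ, b ≤ 3 ^ L ∧ x = (b : ℝ) / 3 ^ L) ∧ x ∈ cantorSet}

theorem Set.ncard_le_mul_ncard_of_subset_biUnion {α β : Type*} {s : Set α} {t : Set β}
    (ht : t.Finite) {f : β → Set α} {k : ℕ} (hst : s ⊆ ⋃ y ∈ t, f y)
    (hk : ∀ y ∈ t, (s ∩ f y).ncard ≤ k) : s.ncard ≤ k * t.ncard := by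
  have hs : s = ⋃ y ∈ ht.toFinset, s ∩ f y := by
    simp only [Set.Finite.mem_toFinset, ← Set.inter_iUnion₂, Set.inter_eq_left.mpr hst]
  calc s.ncard ≤ ∑ y ∈ ht.toFinset, (s ∩ f y).ncard := by
        nth_rewrite 1 [hs]; exact Finset.set_ncard_biUnion_le _ _
    _ ≤ ∑ _ ∈ ht.toFinset, k := Finset.sum_le_sum fun y hy => hk y (by simpa using hy)
    _ = k * t.ncard := by
      rw [Finset.sum_const, smul_eq_mul, mul_comm, Set.ncard_eq_toFinset_card t ht]

theorem ncard_le_of_subset_ball_inter_range_div {d : ℝ} (hd : 0 < d) {c ρ : ℝ} {k : ℕ}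
    (hk : 2 * ρ * d ≤ k) {s : Set ℝ} (hs : s ⊆ ball c ρ ∩ Set.range fun b : ℤ => (b : ℝ) / d) :
    s.ncard ≤ k + 1 := by
  set m := ⌈d * (c - ρ)⌉
  have hsub : s ⊆ ↑((Icc m (m + k)).image fun b : ℤ => (b : ℝ) / d) := by
    rintro x hx
    obtain ⟨hxc, b, rfl⟩ := hs hx
    rw [mem_ball, Real.dist_eq, abs_lt, lt_sub_iff_add_lt, sub_lt_iff_lt_add, div_lt_iff₀ hd,
      lt_div_iff₀ hd] at hxc
    have hm : d * (c - ρ) ≤ m := Int.le_ceil _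
    refine Finset.mem_coe.mpr (Finset.mem_image_of_mem _ (Finset.mem_Icc.mpr ⟨?_, ?_⟩))
    · exact Int.ceil_le.mpr (by linarith)
    · have : (b : ℝ) < m + k := by nlinarith
      exact_mod_cast this.le
  calc s.ncard ≤ ((Icc m (m + k)).image fun b : ℤ => (b : ℝ) / d).card := by
        rw [← Set.ncard_coe_finset]; exact Set.ncard_le_ncard hsub (Finset.finite_toSet _)
    _ ≤ (Icc m (m + k)).card := Finset.card_image_le
    _ = k + 1 := by rw [Int.card_Icc]; omega

theorem cantorEndpoints_subset_range (L : ℕ) :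
    cantorEndpoints L ⊆ Set.range fun b : ℤ => (b : ℝ) / 3 ^ L := by
  rintro x ⟨⟨b, -, rfl⟩, -⟩
  exact ⟨b, by simp⟩

theorem cantorEndpoints_finite (L : ℕ) : (cantorEndpoints L).Finite := by
  refine ((range (3 ^ L + 1)).finite_toSet.image fun b : ℕ => (b : ℝ) / 3 ^ L).subset ?_
  rintro x ⟨⟨b, hb, rfl⟩, -⟩
  exact ⟨b, by simpa [Nat.lt_succ_iff] using hb, rfl⟩

theorem div_three_mem_cantorEndpoints_succ {L : ℕ} {y : ℝ} (hy : y ∈ cantorEndpoints L) :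
    y / 3 ∈ cantorEndpoints (L + 1) := by
  obtain ⟨⟨b, hb, rfl⟩, hyC⟩ := hy
  refine ⟨⟨b, hb.trans (Nat.pow_le_pow_right (by norm_num) L.le_succ), ?_⟩, ?_⟩
  · rw [pow_succ, div_div]
  · rw [cantorSet_eq_union_halves]
    exact Or.inl ⟨_, hyC, rfl⟩

theorem two_add_div_three_mem_cantorEndpoints_succ {L : ℕ} {y : ℝ}
    (hy : y ∈ cantorEndpoints L) : (2 + y) / 3 ∈ cantorEndpoints (L + 1) := by
  obtain ⟨⟨b, hb, rfl⟩, hyC⟩ := hy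
  refine ⟨⟨2 * 3 ^ L + b, by rw [pow_succ]; omega, ?_⟩, ?_⟩
  · push_cast
    field_simp
    ring
  · rw [cantorSet_eq_union_halves]
    exact Or.inr ⟨_, hyC, rfl⟩

theorem exists_mem_cantorEndpoints_le_le_of_mem_preCantorSet {L : ℕ} {x : ℝ}
    (hx : x ∈ preCantorSet L) : ∃ y ∈ cantorEndpoints L, y ≤ x ∧ x ≤ y + (3 ^ L)⁻¹ := by
  induction L generalizing x with
  | zero =>
    obtain ⟨hx0, hx1⟩ := hx
    exact ⟨0, ⟨⟨0, by simp⟩, zero_mem_cantorSet⟩, hx0, by simpa using hx1⟩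
  | succ L ih =>
    have h3 : ((3 : ℝ) ^ (L + 1))⁻¹ = (3 ^ L)⁻¹ / 3 := by rw [pow_succ, mul_inv, div_eq_mul_inv]
    rcases hx with ⟨z, hz, rfl⟩ | ⟨z, hz, rfl⟩
    · obtain ⟨y, hy, hyz, hzy⟩ := ih hz
      exact ⟨y / 3, div_three_mem_cantorEndpoints_succ hy, by linarith, by rw [h3]; linarith⟩
    · obtain ⟨y, hy, hyz, hzy⟩ := ih hz
      exact ⟨(2 + y) / 3, two_add_div_three_mem_cantorEndpoints_succ hy, by linarith,
        by rw [h3]; linarith⟩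

theorem ncard_cantorEndpoints_inter_iUnion_ball_le {ι : Type*} (I : Finset ι) (c : ι → ℝ)
    {q : ℝ} (hq : 0 < q) (hc : ∀ i ∈ I, c i ∈ Set.range fun b : ℤ => (b : ℝ) / q)
    {M N k l : ℕ} {r ρ : ℝ} (hrρ : r + (3 ^ M)⁻¹ ≤ ρ) (hk : 2 * r * 3 ^ N ≤ k)
    (hl : 2 * ρ * q ≤ l) :
    (cantorEndpoints N ∩ ⋃ i ∈ I, ball (c i) r).ncard ≤
      (k + 1) * ((l + 1) * (cantorEndpoints M ∩ ⋃ i ∈ I, ball (c i) ρ).ncard) := by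
  set T := cantorEndpoints M ∩ ⋃ i ∈ I, ball (c i) ρ
  set A := c '' I ∩ ⋃ y ∈ T, ball y ρ
  have hA : A.ncard ≤ (l + 1) * T.ncard := by
    refine Set.ncard_le_mul_ncard_of_subset_biUnion
      ((cantorEndpoints_finite M).subset Set.inter_subset_left) Set.inter_subset_right
      fun y _ => ncard_le_of_subset_ball_inter_range_div (c := y) hq hl ?_
    rintro _ ⟨⟨⟨i, hi, rfl⟩, -⟩, hiy⟩
    exact ⟨hiy, hc i hi⟩
  have hcover : cantorEndpoints N ∩ ⋃ i ∈ I, ball (c i) r ⊆ ⋃ z ∈ A, ball z r := by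
    rintro x ⟨⟨-, hxC⟩, hxI⟩
    obtain ⟨i, hi, hxi⟩ := Set.mem_iUnion₂.mp hxI
    obtain ⟨y, hy, hyx, hxy⟩ :=
      exists_mem_cantorEndpoints_le_le_of_mem_preCantorSet (Set.mem_iInter.mp hxC M)
    have hxy' : dist x y ≤ (3 ^ M)⁻¹ := by
      rw [Real.dist_eq, abs_sub_le_iff]; constructor <;> linarith
    have hiy : dist (c i) y < ρ := calc
      dist (c i) y ≤ dist (c i) x + dist x y := dist_triangle _ _ _
      _ < r + (3 ^ M)⁻¹ := add_lt_add_of_lt_of_le (by rwa [dist_comm]) hxy'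
      _ ≤ ρ := hrρ
    refine Set.mem_iUnion₂.mpr ⟨c i, ⟨⟨i, hi, rfl⟩, Set.mem_iUnion₂.mpr ⟨y, ?_, hiy⟩⟩, hxi⟩
    exact ⟨hy, Set.mem_iUnion₂.mpr ⟨i, hi, by rwa [mem_ball, dist_comm]⟩⟩
  have hS := Set.ncard_le_mul_ncard_of_subset_biUnion
    ((I.finite_toSet.image c).subset Set.inter_subset_left) hcover
    fun z _ => ncard_le_of_subset_ball_inter_range_div (by positivity) hk
      fun x hx => ⟨hx.2, cantorEndpoints_subset_range N hx.1.1⟩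
  exact hS.trans (Nat.mul_le_mul_left _ hA)

/-- If `ψ(2ⁿ)/(125·2ⁿ) ≤ 3^{-N} ≤ 5ψ(2ⁿ)/2ⁿ ≤ 3^{-M} ≤ 2^{9-n}` then
`|C_N ∩ 5A_n| ≤ C·|C_M ∩ 5A_n(M)|` for an absolute constant `C`, where
`5A_n = ⋃_a B(a/2ⁿ, 5ψ(2ⁿ)/2ⁿ)` and `5A_n(M) = ⋃_a B(a/2ⁿ, 5/3^M)`. -/
theorem dropping_down :
    ∃ C : ℝ, 0 < C ∧ ∀ (ψ : ℕ → ℝ), (∀ i, 0 ≤ ψ i) → ∀ n M N : ℕ,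
      ψ (2 ^ n) / (125 * 2 ^ n) ≤ (3:ℝ) ^ (-(N:ℝ)) →
      (3:ℝ) ^ (-(N:ℝ)) ≤ 5 * ψ (2 ^ n) / 2 ^ n →
      5 * ψ (2 ^ n) / 2 ^ n ≤ (3:ℝ) ^ (-(M:ℝ)) →
      (3:ℝ) ^ (-(M:ℝ)) ≤ (2:ℝ) ^ (9 - (n:ℝ)) →
      ((cantorEndpoints N ∩
          ⋃ a ∈ range (2 ^ n + 1), ball ((a:ℝ) / 2 ^ n) (5 * ψ (2 ^ n) / 2 ^ n)).ncard : ℝ) ≤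
        C * ((cantorEndpoints M ∩
          ⋃ a ∈ range (2 ^ n + 1), ball ((a:ℝ) / 2 ^ n) (5 / 3 ^ M)).ncard : ℝ) := by
  refine ⟨1251 * 5121, by norm_num, fun ψ _ n M N hN _ hM hn => ?_⟩
  have h2 : (0 : ℝ) < 2 ^ n := by positivity
  have h3 : (0 : ℝ) < 3 ^ N := by positivity
  rw [Real.rpow_neg_natCast, zpow_neg, zpow_natCast] at hN hM
  rw [Real.rpow_neg_natCast, zpow_neg, zpow_natCast, Real.rpow_sub two_pos,
    Real.rpow_natCast, le_div_iff₀ h2] at hn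
  rw [div_le_iff₀ (by positivity), inv_mul_eq_div, le_div_iff₀ h3] at hN
  have hrρ : 5 * ψ (2 ^ n) / 2 ^ n + (3 ^ M)⁻¹ ≤ 5 / 3 ^ M := by
    rw [div_eq_mul_inv 5]
    linarith [inv_pos.mpr (pow_pos (three_pos (α := ℝ)) M)]
  have hk : 2 * (5 * ψ (2 ^ n) / 2 ^ n) * 3 ^ N ≤ ((1250 : ℕ) : ℝ) := by
    rw [show 2 * (5 * ψ (2 ^ n) / 2 ^ n) * 3 ^ N = 10 * (ψ (2 ^ n) * 3 ^ N) / 2 ^ n by ring,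
      div_le_iff₀ h2]
    push_cast
    linarith
  have hl : 2 * (5 / 3 ^ M) * 2 ^ n ≤ ((5120 : ℕ) : ℝ) := by
    rw [div_eq_mul_inv]
    push_cast
    linarith
  have key := ncard_cantorEndpoints_inter_iUnion_ball_le (range (2 ^ n + 1))
    (fun a : ℕ => (a : ℝ) / 2 ^ n) h2 (fun a _ => ⟨a, by simp⟩) hrρ hk hl
  have := (Nat.cast_le (α := ℝ)).mpr key
  push_cast at this
  linarith
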